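/- Let P be a maximal ranked poset of rank n and let J ⊆ K be nonempty distinct poset ideals of P such that J, K, and K ∖ J are each connected in P, and suppose |max(J)| ≥ 2, with max(J) ⊆ P_j and max(K) ⊆ P_k where j ≤ k. Then j ≥ 1, the sets P_{j−1}, max(J), max(K) are pairwise distinct antichains, and the triple {P_{j−1}, max(J), max(K)} belongs to Δ*_C(P). -/

import Mathlib

open Finset
open scoped Classical

variable (P : Type*) [Fintype P] [PartialOrder P]

/-- The comparability graph of a poset. -/
def compGraph : SimpleGraph P where
  Adj x y := x ≠ y ∧ (x ≤ y ∨ y ≤ x)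
  symm := ⟨fun _ _ h => ⟨h.1.symm, h.2.symm⟩⟩
  loopless := ⟨fun _ h => h.1 rfl⟩

/-- A subset `W` of `P` is connected in `P` if the subgraph of the comparability
graph induced on `W` is connected (this includes `W` being nonempty). -/
def ConnIn (W : Set P) : Prop :=
  (SimpleGraph.induce W (compGraph P)).Connected

/-- A poset ideal (down-set). -/
def IsIdealF (I : Finset P) : Prop :=
  ∀ ⦃x y : P⦄, x ∈ I → y ≤ x → y ∈ I

/-- An antichain of the poset. -/
def IsAntichainF (A : Finset P) : Prop :=
  IsAntichain (· ≤ ·) (↑A : Set P)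

/-- The 0/1 indicator vector of a subset of `P`. -/
noncomputable def rho (W : Finset P) : P → ℝ :=
  fun x => if x ∈ W then 1 else 0

/-- The order polytope of `P`. -/
def orderPolytope : Set (P → ℝ) :=
  {f | (∀ x, 0 ≤ f x ∧ f x ≤ 1) ∧ ∀ ⦃x y : P⦄, x ≤ y → f y ≤ f x}

/-- The chain polytope of `P`. -/
def chainPolytope : Set (P → ℝ) :=
  {f | (∀ x, 0 ≤ f x) ∧ ∀ s : Finset P, IsChain (· ≤ ·) (↑s : Set P) → ∑ x ∈ s, f x ≤ 1}

/-- `conv {u, v}` is an edge (1-dimensional exposed face) of the polytope `S`. -/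
def IsEdgeOf (S : Set (P → ℝ)) (u v : P → ℝ) : Prop :=
  u ≠ v ∧ IsExposed ℝ S (convexHull ℝ {u, v})

/-- `conv {u, v, w}` is a triangular 2-face of the polytope `S`. -/
def IsTriFaceOf (S : Set (P → ℝ)) (u v w : P → ℝ) : Prop :=
  u ≠ v ∧ u ≠ w ∧ v ≠ w ∧ IsExposed ℝ S (convexHull ℝ {u, v, w})

/-- The set of maximal elements of a subset of `P`. -/
noncomputable def maxSet (W : Finset P) : Finset P :=
  W.filter (fun x => ∀ y ∈ W, ¬ x < y)

/-- The set of minimal elements of a subset of `P`. -/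
noncomputable def minSet (W : Finset P) : Finset P :=
  W.filter (fun x => ∀ y ∈ W, ¬ y < x)

/-- The poset ideal generated by a subset of `P`. -/
noncomputable def genIdeal (A : Finset P) : Finset P :=
  univ.filter (fun x => ∃ a ∈ A, x ≤ a)

/-- The pair `{I, J}` belongs to `E*_O(P)`. -/
noncomputable def EstarO (I J : Finset P) : Prop :=
  IsIdealF P I ∧ IsIdealF P J ∧ I ≠ J ∧
    IsEdgeOf P (orderPolytope P) (rho P I) (rho P J) ∧
    ¬ IsEdgeOf P (chainPolytope P) (rho P (maxSet P I)) (rho P (maxSet P J))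

/-- The pair `{A, B}` belongs to `E*_C(P)`. -/
noncomputable def EstarC (A B : Finset P) : Prop :=
  IsAntichainF P A ∧ IsAntichainF P B ∧ A ≠ B ∧
    IsEdgeOf P (chainPolytope P) (rho P A) (rho P B) ∧
    ¬ IsEdgeOf P (orderPolytope P) (rho P (genIdeal P A)) (rho P (genIdeal P B))

/-- `Δ_O(P)`: unordered triples of pairwise distinct poset ideals spanning a
triangular 2-face of the order polytope. -/
def DeltaO : Set (Finset (Finset P)) :=
  {T | ∃ I J K : Finset P, T = {I, J, K} ∧ I ≠ J ∧ I ≠ K ∧ J ≠ K ∧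
    IsIdealF P I ∧ IsIdealF P J ∧ IsIdealF P K ∧
    IsTriFaceOf P (orderPolytope P) (rho P I) (rho P J) (rho P K)}

/-- `Δ_C(P)`: unordered triples of pairwise distinct antichains spanning a
triangular 2-face of the chain polytope. -/
def DeltaC : Set (Finset (Finset P)) :=
  {T | ∃ A B C : Finset P, T = {A, B, C} ∧ A ≠ B ∧ A ≠ C ∧ B ≠ C ∧
    IsAntichainF P A ∧ IsAntichainF P B ∧ IsAntichainF P C ∧
    IsTriFaceOf P (chainPolytope P) (rho P A) (rho P B) (rho P C)}

/-- `Δ*_O(P)`: triples in `Δ_O(P)` at least one of whose pairs lies in `E*_O(P)`. -/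
def DeltaStarO : Set (Finset (Finset P)) :=
  {T | T ∈ DeltaO P ∧ ∃ I ∈ T, ∃ J ∈ T, I ≠ J ∧ EstarO P I J}

/-- `Δ*_C(P)`: triples in `Δ_C(P)` at least one of whose pairs lies in `E*_C(P)`. -/
def DeltaStarC : Set (Finset (Finset P)) :=
  {T | T ∈ DeltaC P ∧ ∃ A ∈ T, ∃ B ∈ T, A ≠ B ∧ EstarC P A B}

/-- `r` is a rank function exhibiting `P` as a maximal ranked poset of rank `n`:
`r` is surjective onto `{0, …, n}` and `x < y ↔ r x < r y`. -/
def IsMaxRanked (r : P → ℕ) (n : ℕ) : Prop :=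
  (∀ x, r x ≤ n) ∧ (∀ i, i ≤ n → ∃ x, r x = i) ∧ (∀ x y : P, x < y ↔ r x < r y)

/-- The rank level `P_i`. -/
noncomputable def level (r : P → ℕ) (i : ℕ) : Finset P :=
  univ.filter (fun x => r x = i)

/-- `P` contains an `X`-poset as a subposet. -/
def ContainsX : Prop :=
  ∃ a b c d e : P,
    a ≠ b ∧ a ≠ c ∧ a ≠ d ∧ a ≠ e ∧ b ≠ c ∧ b ≠ d ∧ b ≠ e ∧ c ≠ d ∧ c ≠ e ∧ d ≠ e ∧
    a < c ∧ b < c ∧ c < d ∧ c < e ∧ ¬ a ≤ b ∧ ¬ b ≤ a ∧ ¬ d ≤ e ∧ ¬ e ≤ d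

/-! ### Auxiliary lemmas -/

set_option linter.unusedSectionVars false

section Aux

variable {P}

lemma rho_inj {W W' : Finset P} (h : rho P W = rho P W') : W = W' := by
  ext x
  have hx := congrFun h x
  simp only [rho] at hx
  by_cases h1 : x ∈ W <;> by_cases h2 : x ∈ W' <;> simp_all

/-- The linear functional `f ↦ ∑ x, c x * f x`. -/
noncomputable def lmap (c : P → ℝ) : (P → ℝ) →L[ℝ] ℝ :=
  LinearMap.toContinuousLinearMap
    { toFun := fun f => ∑ x, c x * f x
      map_add' := by intro f g; simp [mul_add, Finset.sum_add_distrib]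
      map_smul' := by
        intro a f
        simp only [Pi.smul_apply, smul_eq_mul, RingHom.id_apply, Finset.mul_sum]
        exact Finset.sum_congr rfl fun x _ => by ring }

lemma lmap_apply (c : P → ℝ) (f : P → ℝ) : lmap c f = ∑ x, c x * f x := rfl

lemma lmap_rho (c : P → ℝ) (W : Finset P) : lmap c (rho P W) = ∑ x ∈ W, c x := by
  rw [lmap_apply]
  rw [Finset.sum_congr rfl (fun x _ => by
    show c x * rho P W x = if x ∈ W then c x else 0
    simp only [rho]; split <;> simp)]
  simp [Finset.sum_ite_mem]

section Ranked

variable {r : P → ℕ} {n : ℕ} (hr : IsMaxRanked P r n)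
include hr

lemma rank_le_of_le {x y : P} (h : x ≤ y) : r x ≤ r y := by
  rcases eq_or_lt_of_le h with h' | h'
  · exact h' ▸ le_rfl
  · exact le_of_lt ((hr.2.2 x y).1 h')

lemma eq_of_le_rank_eq {x y : P} (h : x ≤ y) (hre : r x = r y) : x = y := by
  rcases eq_or_lt_of_le h with h' | h'
  · exact h'
  · exact absurd ((hr.2.2 x y).1 h') (by omega)

lemma comparable_of_rank_ne {x y : P} (h : r x ≠ r y) : x ≤ y ∨ y ≤ x := by
  rcases lt_or_gt_of_ne h with h' | h'
  · exact Or.inl (le_of_lt ((hr.2.2 x y).2 h'))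
  · exact Or.inr (le_of_lt ((hr.2.2 y x).2 h'))

lemma level_nonempty {i : ℕ} (hi : i ≤ n) : (level P r i).Nonempty := by
  obtain ⟨x, hx⟩ := hr.2.1 i hi
  exact ⟨x, by simp [level, hx]⟩

lemma mem_level_iff {i : ℕ} {x : P} : x ∈ level P r i ↔ r x = i := by
  simp [level]

lemma antichain_of_subset_level {W : Finset P} {i : ℕ} (hW : W ⊆ level P r i) :
    IsAntichainF P W := by
  intro x hx y hy hxy hle
  have hrx : r x = i := (mem_level_iff hr).1 (hW hx)
  have hry : r y = i := (mem_level_iff hr).1 (hW hy)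
  exact hxy (eq_of_le_rank_eq hr hle (hrx.trans hry.symm))

lemma isChain_of_rank_inj {s : Finset P} (hs : ∀ x ∈ s, ∀ y ∈ s, r x = r y → x = y) :
    IsChain (· ≤ ·) (↑s : Set P) := by
  intro x hx y hy hxy
  exact comparable_of_rank_ne hr (fun h => hxy (hs x hx y hy h))

lemma cp_pair {f : P → ℝ} (hf : f ∈ chainPolytope P) {x y : P} (h : r x ≠ r y) :
    f x + f y ≤ 1 := by
  have hxy : x ≠ y := fun e => h (e ▸ rfl)
  have := hf.2 {x, y} (isChain_of_rank_inj hr (by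
    intro a ha b hb hab
    simp only [Finset.mem_insert, Finset.mem_singleton] at ha hb
    rcases ha with rfl | rfl <;> rcases hb with rfl | rfl <;> first | rfl | exact absurd hab h | exact absurd hab.symm h))
  rwa [Finset.sum_pair hxy] at this

lemma cp_triple {f : P → ℝ} (hf : f ∈ chainPolytope P) {x y z : P}
    (hxy : r x ≠ r y) (hxz : r x ≠ r z) (hyz : r y ≠ r z) :
    f x + f y + f z ≤ 1 := by
  have hxy' : x ≠ y := fun e => hxy (e ▸ rfl)
  have hxz' : x ≠ z := fun e => hxz (e ▸ rfl)
  have hyz' : y ≠ z := fun e => hyz (e ▸ rfl)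
  have := hf.2 {x, y, z} (isChain_of_rank_inj hr (by
    intro a ha b hb hab
    simp only [Finset.mem_insert, Finset.mem_singleton] at ha hb
    rcases ha with rfl | rfl | rfl <;> rcases hb with rfl | rfl | rfl <;> first | rfl | exact absurd hab hxy | exact absurd hab.symm hxy | exact absurd hab hxz | exact absurd hab.symm hxz | exact absurd hab hyz | exact absurd hab.symm hyz))
  rw [Finset.sum_insert (by simp [hxy', hxz']), Finset.sum_pair hyz'] at this
  linarith

lemma rho_mem_cp {W : Finset P} {i : ℕ} (hW : W ⊆ level P r i) :
    rho P W ∈ chainPolytope P := by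
  constructor
  · intro x; simp only [rho]; split <;> norm_num
  · intro s hs
    have : ∑ x ∈ s, rho P W x = ((s.filter (· ∈ W)).card : ℝ) := by
      rw [Finset.card_filter]
      push_cast
      exact Finset.sum_congr rfl fun x _ => by simp [rho]
    rw [this]
    norm_cast
    by_contra hc
    push_neg at hc
    obtain ⟨a, ha, b, hb, hab⟩ := Finset.one_lt_card.1 hc
    simp only [Finset.mem_filter] at ha hb
    have hcomp := hs ha.1 hb.1 hab
    have hra : r a = i := (mem_level_iff hr).1 (hW ha.2)
    have hrb : r b = i := (mem_level_iff hr).1 (hW hb.2)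
    rcases hcomp with h | h
    · exact hab (eq_of_le_rank_eq hr h (hra.trans hrb.symm))
    · exact hab (eq_of_le_rank_eq hr h (hrb.trans hra.symm)).symm

end Ranked

lemma cp_convex : Convex ℝ (chainPolytope P) := by
  intro f hf g hg a b ha hb hab
  constructor
  · intro x
    have := hf.1 x; have := hg.1 x
    simp only [Pi.add_apply, Pi.smul_apply, smul_eq_mul]
    positivity
  · intro s hs
    have h1 := hf.2 s hs
    have h2 := hg.2 s hs
    simp only [Pi.add_apply, Pi.smul_apply, smul_eq_mul]
    rw [Finset.sum_add_distrib, ← Finset.mul_sum, ← Finset.mul_sum]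
    nlinarith

lemma rho_ideal_mem_op {I : Finset P} (hI : IsIdealF P I) :
    rho P I ∈ orderPolytope P := by
  constructor
  · intro x; simp only [rho]; split <;> norm_num
  · intro x y hxy
    simp only [rho]
    by_cases hy : y ∈ I
    · simp [hy, hI hy hxy]
    · simp only [if_neg hy]; split <;> norm_num

lemma isExposed_of_lmap (c : P → ℝ) (S : Set (P → ℝ)) (u : P → ℝ)
    (huS : u ∈ S)
    (hle : ∀ f ∈ chainPolytope P, lmap c f ≤ 1)
    (hS : S ⊆ {f ∈ chainPolytope P | lmap c f = 1})
    (hS' : ∀ f ∈ chainPolytope P, lmap c f = 1 → f ∈ S) :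
    IsExposed ℝ (chainPolytope P) S := by
  intro _
  refine ⟨lmap c, ?_⟩
  ext f
  constructor
  · intro hf
    obtain ⟨hfc, hf1⟩ := hS hf
    exact ⟨hfc, fun y hy => (hle y hy).trans_eq hf1.symm⟩
  · rintro ⟨hfc, hmax⟩
    have h1 : lmap c u = 1 := (hS huS).2
    have hu : u ∈ chainPolytope P := (hS huS).1
    exact hS' f hfc (le_antisymm (hle f hfc) (h1 ▸ hmax u hu))

lemma mem_hull3 {u v w p : P → ℝ} {α β γ : ℝ} (hα : 0 ≤ α) (hβ : 0 ≤ β) (hγ : 0 ≤ γ)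
    (hsum : α + β + γ = 1) (hp : p = α • u + β • v + γ • w) :
    p ∈ convexHull ℝ ({u, v, w} : Set (P → ℝ)) := by
  subst hp
  have h := (convex_convexHull ℝ ({u, v, w} : Set (P → ℝ))).sum_mem
    (t := (Finset.univ : Finset (Fin 3))) (w := ![α, β, γ]) (z := ![u, v, w])
    (fun i _ => by fin_cases i <;> simpa)
    (by simp [Fin.sum_univ_three, hsum])
    (fun i _ => by
      fin_cases i <;> simp <;>
        exact subset_convexHull ℝ _ (by simp))
  simpa [Fin.sum_univ_three] using h

lemma mem_hull2 {u v p : P → ℝ} {α β : ℝ} (hα : 0 ≤ α) (hβ : 0 ≤ β)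
    (hsum : α + β = 1) (hp : p = α • u + β • v) :
    p ∈ convexHull ℝ ({u, v} : Set (P → ℝ)) := by
  subst hp
  exact (convex_convexHull ℝ _) (subset_convexHull ℝ _ (by simp))
    (subset_convexHull ℝ _ (by simp)) hα hβ hsum

lemma not_edge_of_mid {S : Set (P → ℝ)} {u v y z : P → ℝ} (hy : y ∈ S) (hz : z ∈ S)
    (hmid : (1/2 : ℝ) • y + (1/2 : ℝ) • z = (1/2 : ℝ) • u + (1/2 : ℝ) • v)
    (hyuv : y ∉ convexHull ℝ ({u, v} : Set (P → ℝ))) :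
    ¬ IsEdgeOf P S u v := by
  rintro ⟨hne, hexp⟩
  have hex := hexp.isExtreme
  have hmem : (1/2:ℝ) • u + (1/2:ℝ) • v ∈ convexHull ℝ ({u, v} : Set (P → ℝ)) :=
    mem_hull2 (by norm_num) (by norm_num) (by norm_num) rfl
  have hop : (1/2:ℝ) • u + (1/2:ℝ) • v ∈ openSegment ℝ y z :=
    ⟨1/2, 1/2, by norm_num, by norm_num, by norm_num, hmid⟩
  exact hyuv (hex.2 hy hz hmem hop)

lemma inv_card_sum_le {f : P → ℝ} {D : Finset P} (hD : D.Nonempty) {m : ℝ}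
    (hm : ∀ x ∈ D, f x ≤ m) : (D.card : ℝ)⁻¹ * ∑ x ∈ D, f x ≤ m := by
  have hc : (0:ℝ) < (D.card : ℝ) := by exact_mod_cast Finset.card_pos.2 hD
  have h := Finset.sum_le_card_nsmul D f m hm
  rw [nsmul_eq_mul] at h
  calc (D.card : ℝ)⁻¹ * ∑ x ∈ D, f x ≤ (D.card:ℝ)⁻¹ * ((D.card:ℝ) * m) :=
        mul_le_mul_of_nonneg_left h (by positivity)
    _ = m := by field_simp

lemma const_on_of_eq {f : P → ℝ} {D : Finset P} (hD : D.Nonempty) {m : ℝ}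
    (hm : ∀ x ∈ D, f x ≤ m)
    (heq : (D.card : ℝ)⁻¹ * ∑ x ∈ D, f x = m) : ∀ x ∈ D, f x = m := by
  have hc : (0:ℝ) < (D.card:ℝ) := by exact_mod_cast Finset.card_pos.2 hD
  have hsum : ∑ x ∈ D, f x = (D.card:ℝ) * m := by
    field_simp at heq; linarith
  have h0 : ∑ x ∈ D, (m - f x) = 0 := by
    rw [Finset.sum_sub_distrib, Finset.sum_const, nsmul_eq_mul, hsum]; ring
  intro x hx
  have := (Finset.sum_eq_zero_iff_of_nonneg (fun y hy => sub_nonneg.2 (hm y hy))).1 h0 x hx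
  linarith

lemma sum_const_inv {D : Finset P} (hD : D.Nonempty) : ∑ _x ∈ D, (D.card:ℝ)⁻¹ = 1 := by
  have hc : ((D.card : ℝ)) ≠ 0 := by
    exact_mod_cast Finset.card_ne_zero.2 hD
  rw [Finset.sum_const, nsmul_eq_mul, mul_inv_cancel₀ hc]

lemma face2 {r : P → ℕ} {n : ℕ} (hr : IsMaxRanked P r n) {A B : Finset P} {a b : ℕ}
    (hA : A ⊆ level P r a) (hB : B ⊆ level P r b)
    (hAne : A.Nonempty) (hBne : B.Nonempty) (hab : a ≠ b) :
    IsExposed ℝ (chainPolytope P) (convexHull ℝ {rho P A, rho P B}) := by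
  have hrA : ∀ x ∈ A, r x = a := fun x hx => (mem_level_iff hr).1 (hA hx)
  have hrB : ∀ x ∈ B, r x = b := fun x hx => (mem_level_iff hr).1 (hB hx)
  have hdAB : Disjoint A B := Finset.disjoint_left.2 fun hx hx' h =>
    hab ((hrA _ hx').symm.trans (hrB _ h))
  set c : P → ℝ := fun x => if x ∈ A then (A.card:ℝ)⁻¹ else if x ∈ B then (B.card:ℝ)⁻¹ else -2
    with hc
  have key : ∀ f : P → ℝ, lmap c f = (A.card:ℝ)⁻¹ * ∑ x ∈ A, f x
      + (B.card:ℝ)⁻¹ * ∑ x ∈ B, f x - 2 * ∑ x ∈ Finset.univ \ (A ∪ B), f x := by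
    intro f
    rw [lmap_apply, ← Finset.sum_sdiff (Finset.subset_univ (A ∪ B)), Finset.sum_union hdAB]
    have e1 : ∑ x ∈ A, c x * f x = (A.card:ℝ)⁻¹ * ∑ x ∈ A, f x := by
      rw [Finset.mul_sum]
      exact Finset.sum_congr rfl fun x hx => by simp [hc, hx]
    have e2 : ∑ x ∈ B, c x * f x = (B.card:ℝ)⁻¹ * ∑ x ∈ B, f x := by
      rw [Finset.mul_sum]
      refine Finset.sum_congr rfl fun x hx => ?_
      have hxA : x ∉ A := Finset.disjoint_right.1 hdAB hx
      simp [hc, hx, hxA]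
    have e3 : ∑ x ∈ Finset.univ \ (A ∪ B), c x * f x
        = -2 * ∑ x ∈ Finset.univ \ (A ∪ B), f x := by
      rw [Finset.mul_sum]
      refine Finset.sum_congr rfl fun x hx => ?_
      simp only [Finset.mem_sdiff, Finset.mem_union] at hx
      push_neg at hx
      simp [hc, hx.2.1, hx.2.2]
    rw [e1, e2, e3]; ring
  have lA : lmap c (rho P A) = 1 := by
    rw [lmap_rho]
    rw [Finset.sum_congr rfl (fun x hx => if_pos hx)]
    exact sum_const_inv hAne
  have lB : lmap c (rho P B) = 1 := by
    rw [lmap_rho]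
    rw [Finset.sum_congr rfl (fun x hx => by
      have hxA : x ∉ A := Finset.disjoint_right.1 hdAB hx
      show c x = (B.card:ℝ)⁻¹
      simp [hc, hx, hxA])]
    exact sum_const_inv hBne
  apply isExposed_of_lmap c _ (rho P A) (subset_convexHull ℝ _ (by simp))
  · intro f hf
    obtain ⟨xa, hxa, hma⟩ := Finset.exists_max_image A f hAne
    obtain ⟨xb, hxb, hmb⟩ := Finset.exists_max_image B f hBne
    have h1 := inv_card_sum_le hAne hma
    have h2 := inv_card_sum_le hBne hmb
    have hch : f xa + f xb ≤ 1 := cp_pair hr hf (by rw [hrA xa hxa, hrB xb hxb]; exact hab)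
    have hrest : 0 ≤ ∑ x ∈ Finset.univ \ (A ∪ B), f x :=
      Finset.sum_nonneg fun x _ => hf.1 x
    rw [key]; linarith
  · apply convexHull_min
    · rintro g (rfl | rfl)
      · exact ⟨rho_mem_cp hr hA, lA⟩
      · exact ⟨rho_mem_cp hr hB, lB⟩
    · exact (cp_convex (P := P)).inter
        (convex_hyperplane ⟨(lmap c).map_add, (lmap c).map_smul⟩ 1)
  · intro f hf hf1
    obtain ⟨xa, hxa, hma⟩ := Finset.exists_max_image A f hAne
    obtain ⟨xb, hxb, hmb⟩ := Finset.exists_max_image B f hBne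
    have h1 := inv_card_sum_le hAne hma
    have h2 := inv_card_sum_le hBne hmb
    have hch : f xa + f xb ≤ 1 := cp_pair hr hf (by rw [hrA xa hxa, hrB xb hxb]; exact hab)
    have hrest : 0 ≤ ∑ x ∈ Finset.univ \ (A ∪ B), f x :=
      Finset.sum_nonneg fun x _ => hf.1 x
    rw [key] at hf1
    have hR : ∑ x ∈ Finset.univ \ (A ∪ B), f x = 0 := by linarith
    have hSA : (A.card:ℝ)⁻¹ * ∑ x ∈ A, f x = f xa := by linarith
    have hSB : (B.card:ℝ)⁻¹ * ∑ x ∈ B, f x = f xb := by linarith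
    have hsum1 : f xa + f xb = 1 := by linarith
    have hcA := const_on_of_eq hAne hma hSA
    have hcB := const_on_of_eq hBne hmb hSB
    have hzero : ∀ x ∈ Finset.univ \ (A ∪ B), f x = 0 :=
      fun x hx => (Finset.sum_eq_zero_iff_of_nonneg (fun y _ => hf.1 y)).1 hR x hx
    have hfe : f = f xa • rho P A + f xb • rho P B := by
      funext x
      by_cases hxA : x ∈ A
      · have hxB : x ∉ B := Finset.disjoint_left.1 hdAB hxA
        simp [rho, hxA, hxB, hcA x hxA]
      · by_cases hxB : x ∈ B
        · simp [rho, hxA, hxB, hcB x hxB]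
        · have := hzero x (by simp [hxA, hxB])
          simp [rho, hxA, hxB, this]
    exact mem_hull2 (hf.1 xa) (hf.1 xb) hsum1 hfe

lemma face3 {r : P → ℕ} {n : ℕ} (hr : IsMaxRanked P r n) {A B C : Finset P} {a b c : ℕ}
    (hA : A ⊆ level P r a) (hB : B ⊆ level P r b) (hC : C ⊆ level P r c)
    (hAne : A.Nonempty) (hBne : B.Nonempty) (hCne : C.Nonempty)
    (hab : a ≠ b) (hac : a ≠ c) (hbc : b ≠ c) :
    IsExposed ℝ (chainPolytope P) (convexHull ℝ {rho P A, rho P B, rho P C}) := by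
  have hrA : ∀ x ∈ A, r x = a := fun x hx => (mem_level_iff hr).1 (hA hx)
  have hrB : ∀ x ∈ B, r x = b := fun x hx => (mem_level_iff hr).1 (hB hx)
  have hrC : ∀ x ∈ C, r x = c := fun x hx => (mem_level_iff hr).1 (hC hx)
  have hdAB : Disjoint A B := Finset.disjoint_left.2 fun hx hx' h =>
    hab ((hrA _ hx').symm.trans (hrB _ h))
  have hdAC : Disjoint A C := Finset.disjoint_left.2 fun hx hx' h =>
    hac ((hrA _ hx').symm.trans (hrC _ h))
  have hdBC : Disjoint B C := Finset.disjoint_left.2 fun hx hx' h =>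
    hbc ((hrB _ hx').symm.trans (hrC _ h))
  have hdABC : Disjoint (A ∪ B) C := Finset.disjoint_union_left.2 ⟨hdAC, hdBC⟩
  set w : P → ℝ := fun x => if x ∈ A then (A.card:ℝ)⁻¹ else if x ∈ B then (B.card:ℝ)⁻¹
    else if x ∈ C then (C.card:ℝ)⁻¹ else -2 with hw
  have key : ∀ f : P → ℝ, lmap w f = (A.card:ℝ)⁻¹ * ∑ x ∈ A, f x
      + (B.card:ℝ)⁻¹ * ∑ x ∈ B, f x + (C.card:ℝ)⁻¹ * ∑ x ∈ C, f x
      - 2 * ∑ x ∈ Finset.univ \ (A ∪ B ∪ C), f x := by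
    intro f
    rw [lmap_apply, ← Finset.sum_sdiff (Finset.subset_univ (A ∪ B ∪ C)),
      Finset.sum_union hdABC, Finset.sum_union hdAB]
    have e1 : ∑ x ∈ A, w x * f x = (A.card:ℝ)⁻¹ * ∑ x ∈ A, f x := by
      rw [Finset.mul_sum]
      exact Finset.sum_congr rfl fun x hx => by simp [hw, hx]
    have e2 : ∑ x ∈ B, w x * f x = (B.card:ℝ)⁻¹ * ∑ x ∈ B, f x := by
      rw [Finset.mul_sum]
      refine Finset.sum_congr rfl fun x hx => ?_
      have hxA : x ∉ A := Finset.disjoint_right.1 hdAB hx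
      simp [hw, hx, hxA]
    have e3 : ∑ x ∈ C, w x * f x = (C.card:ℝ)⁻¹ * ∑ x ∈ C, f x := by
      rw [Finset.mul_sum]
      refine Finset.sum_congr rfl fun x hx => ?_
      have hxA : x ∉ A := Finset.disjoint_right.1 hdAC hx
      have hxB : x ∉ B := Finset.disjoint_right.1 hdBC hx
      simp [hw, hx, hxA, hxB]
    have e4 : ∑ x ∈ Finset.univ \ (A ∪ B ∪ C), w x * f x
        = -2 * ∑ x ∈ Finset.univ \ (A ∪ B ∪ C), f x := by
      rw [Finset.mul_sum]
      refine Finset.sum_congr rfl fun x hx => ?_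
      simp only [Finset.mem_sdiff, Finset.mem_union] at hx
      push_neg at hx
      simp [hw, hx.2.1.1, hx.2.1.2, hx.2.2]
    rw [e1, e2, e3, e4]; ring
  have lA : lmap w (rho P A) = 1 := by
    rw [lmap_rho, Finset.sum_congr rfl (fun x hx => if_pos hx)]
    exact sum_const_inv hAne
  have lB : lmap w (rho P B) = 1 := by
    rw [lmap_rho, Finset.sum_congr rfl (fun x hx => by
      have hxA : x ∉ A := Finset.disjoint_right.1 hdAB hx
      show w x = (B.card:ℝ)⁻¹
      simp [hw, hx, hxA])]
    exact sum_const_inv hBne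
  have lC : lmap w (rho P C) = 1 := by
    rw [lmap_rho, Finset.sum_congr rfl (fun x hx => by
      have hxA : x ∉ A := Finset.disjoint_right.1 hdAC hx
      have hxB : x ∉ B := Finset.disjoint_right.1 hdBC hx
      show w x = (C.card:ℝ)⁻¹
      simp [hw, hx, hxA, hxB])]
    exact sum_const_inv hCne
  apply isExposed_of_lmap w _ (rho P A) (subset_convexHull ℝ _ (by simp))
  · intro f hf
    obtain ⟨xa, hxa, hma⟩ := Finset.exists_max_image A f hAne
    obtain ⟨xb, hxb, hmb⟩ := Finset.exists_max_image B f hBne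
    obtain ⟨xc, hxc, hmc⟩ := Finset.exists_max_image C f hCne
    have h1 := inv_card_sum_le hAne hma
    have h2 := inv_card_sum_le hBne hmb
    have h3 := inv_card_sum_le hCne hmc
    have hch : f xa + f xb + f xc ≤ 1 := cp_triple hr hf
      (by rw [hrA xa hxa, hrB xb hxb]; exact hab)
      (by rw [hrA xa hxa, hrC xc hxc]; exact hac)
      (by rw [hrB xb hxb, hrC xc hxc]; exact hbc)
    have hrest : 0 ≤ ∑ x ∈ Finset.univ \ (A ∪ B ∪ C), f x :=
      Finset.sum_nonneg fun x _ => hf.1 x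
    rw [key]; linarith
  · apply convexHull_min
    · rintro g (rfl | rfl | rfl)
      · exact ⟨rho_mem_cp hr hA, lA⟩
      · exact ⟨rho_mem_cp hr hB, lB⟩
      · exact ⟨rho_mem_cp hr hC, lC⟩
    · exact (cp_convex (P := P)).inter
        (convex_hyperplane ⟨(lmap w).map_add, (lmap w).map_smul⟩ 1)
  · intro f hf hf1
    obtain ⟨xa, hxa, hma⟩ := Finset.exists_max_image A f hAne
    obtain ⟨xb, hxb, hmb⟩ := Finset.exists_max_image B f hBne
    obtain ⟨xc, hxc, hmc⟩ := Finset.exists_max_image C f hCne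
    have h1 := inv_card_sum_le hAne hma
    have h2 := inv_card_sum_le hBne hmb
    have h3 := inv_card_sum_le hCne hmc
    have hch : f xa + f xb + f xc ≤ 1 := cp_triple hr hf
      (by rw [hrA xa hxa, hrB xb hxb]; exact hab)
      (by rw [hrA xa hxa, hrC xc hxc]; exact hac)
      (by rw [hrB xb hxb, hrC xc hxc]; exact hbc)
    have hrest : 0 ≤ ∑ x ∈ Finset.univ \ (A ∪ B ∪ C), f x :=
      Finset.sum_nonneg fun x _ => hf.1 x
    rw [key] at hf1
    have hR : ∑ x ∈ Finset.univ \ (A ∪ B ∪ C), f x = 0 := by linarith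
    have hSA : (A.card:ℝ)⁻¹ * ∑ x ∈ A, f x = f xa := by linarith
    have hSB : (B.card:ℝ)⁻¹ * ∑ x ∈ B, f x = f xb := by linarith
    have hSC : (C.card:ℝ)⁻¹ * ∑ x ∈ C, f x = f xc := by linarith
    have hsum1 : f xa + f xb + f xc = 1 := by linarith
    have hcA := const_on_of_eq hAne hma hSA
    have hcB := const_on_of_eq hBne hmb hSB
    have hcC := const_on_of_eq hCne hmc hSC
    have hzero : ∀ x ∈ Finset.univ \ (A ∪ B ∪ C), f x = 0 :=
      fun x hx => (Finset.sum_eq_zero_iff_of_nonneg (fun y _ => hf.1 y)).1 hR x hx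
    refine mem_hull3 (hf.1 xa) (hf.1 xb) (hf.1 xc) hsum1 ?_
    funext x
    by_cases hxA : x ∈ A
    · have hxB : x ∉ B := Finset.disjoint_left.1 hdAB hxA
      have hxC : x ∉ C := Finset.disjoint_left.1 hdAC hxA
      simp [rho, hxA, hxB, hxC, hcA x hxA]
    · by_cases hxB : x ∈ B
      · have hxC : x ∉ C := Finset.disjoint_left.1 hdBC hxB
        simp [rho, hxA, hxB, hxC, hcB x hxB]
      · by_cases hxC : x ∈ C
        · simp [rho, hxA, hxB, hxC, hcC x hxC]
        · have := hzero x (by simp [hxA, hxB, hxC])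
          simp [rho, hxA, hxB, hxC, this]

lemma face3z {r : P → ℕ} {n : ℕ} (hr : IsMaxRanked P r n) {A B : Finset P} {z : P} {a b : ℕ}
    (hA : A ⊆ level P r a) (hB : B ⊆ level P r b) (hz : r z = b) (hzB : z ∉ B)
    (hAne : A.Nonempty) (hBne : B.Nonempty) (hab : a ≠ b) :
    IsExposed ℝ (chainPolytope P) (convexHull ℝ {rho P A, rho P B, rho P (insert z B)}) := by
  have hrA : ∀ x ∈ A, r x = a := fun x hx => (mem_level_iff hr).1 (hA hx)
  have hrB : ∀ x ∈ B, r x = b := fun x hx => (mem_level_iff hr).1 (hB hx)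
  have hdAB : Disjoint A B := Finset.disjoint_left.2 fun hx hx' h =>
    hab ((hrA _ hx').symm.trans (hrB _ h))
  have hzA : z ∉ A := fun h => hab ((hrA z h).symm.trans hz)
  have hdABz : Disjoint (A ∪ B) ({z} : Finset P) := by
    rw [Finset.disjoint_singleton_right, Finset.mem_union]
    simp [hzA, hzB]
  set w : P → ℝ := fun x => if x ∈ A then (A.card:ℝ)⁻¹ else if x ∈ B then (B.card:ℝ)⁻¹
    else if x = z then 0 else -2 with hw
  have key : ∀ f : P → ℝ, lmap w f = (A.card:ℝ)⁻¹ * ∑ x ∈ A, f x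
      + (B.card:ℝ)⁻¹ * ∑ x ∈ B, f x
      - 2 * ∑ x ∈ Finset.univ \ (A ∪ B ∪ {z}), f x := by
    intro f
    rw [lmap_apply, ← Finset.sum_sdiff (Finset.subset_univ (A ∪ B ∪ {z})),
      Finset.sum_union hdABz, Finset.sum_union hdAB]
    have e1 : ∑ x ∈ A, w x * f x = (A.card:ℝ)⁻¹ * ∑ x ∈ A, f x := by
      rw [Finset.mul_sum]
      exact Finset.sum_congr rfl fun x hx => by simp [hw, hx]
    have e2 : ∑ x ∈ B, w x * f x = (B.card:ℝ)⁻¹ * ∑ x ∈ B, f x := by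
      rw [Finset.mul_sum]
      refine Finset.sum_congr rfl fun x hx => ?_
      have hxA : x ∉ A := Finset.disjoint_right.1 hdAB hx
      simp [hw, hx, hxA]
    have e3 : ∑ x ∈ ({z} : Finset P), w x * f x = 0 := by
      rw [Finset.sum_singleton]
      simp [hw, hzA, hzB]
    have e4 : ∑ x ∈ Finset.univ \ (A ∪ B ∪ {z}), w x * f x
        = -2 * ∑ x ∈ Finset.univ \ (A ∪ B ∪ {z}), f x := by
      rw [Finset.mul_sum]
      refine Finset.sum_congr rfl fun x hx => ?_
      simp only [Finset.mem_sdiff, Finset.mem_union, Finset.mem_singleton] at hx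
      push_neg at hx
      simp [hw, hx.2.1.1, hx.2.1.2, hx.2.2]
    rw [e1, e2, e3, e4]; ring
  have lA : lmap w (rho P A) = 1 := by
    rw [lmap_rho, Finset.sum_congr rfl (fun x hx => if_pos hx)]
    exact sum_const_inv hAne
  have lBsum : ∑ x ∈ B, w x = 1 := by
    rw [Finset.sum_congr rfl (fun x hx => by
      have hxA : x ∉ A := Finset.disjoint_right.1 hdAB hx
      show w x = (B.card:ℝ)⁻¹
      simp [hw, hx, hxA])]
    exact sum_const_inv hBne
  have lB : lmap w (rho P B) = 1 := by rw [lmap_rho]; exact lBsum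
  have lC : lmap w (rho P (insert z B)) = 1 := by
    rw [lmap_rho, Finset.sum_insert hzB, lBsum]
    simp [hw, hzA, hzB]
  apply isExposed_of_lmap w _ (rho P A) (subset_convexHull ℝ _ (by simp))
  · intro f hf
    obtain ⟨xa, hxa, hma⟩ := Finset.exists_max_image A f hAne
    obtain ⟨xb, hxb, hmb⟩ := Finset.exists_max_image B f hBne
    have h1 := inv_card_sum_le hAne hma
    have h2 := inv_card_sum_le hBne hmb
    have hch : f xa + f xb ≤ 1 := cp_pair hr hf (by rw [hrA xa hxa, hrB xb hxb]; exact hab)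
    have hrest : 0 ≤ ∑ x ∈ Finset.univ \ (A ∪ B ∪ {z}), f x :=
      Finset.sum_nonneg fun x _ => hf.1 x
    rw [key]; linarith
  · apply convexHull_min
    · rintro g (rfl | rfl | rfl)
      · exact ⟨rho_mem_cp hr hA, lA⟩
      · exact ⟨rho_mem_cp hr hB, lB⟩
      · refine ⟨rho_mem_cp hr (i := b) ?_, lC⟩
        intro x hx
        rcases Finset.mem_insert.1 hx with rfl | hx
        · exact (mem_level_iff hr).2 hz
        · exact hB hx
    · exact (cp_convex (P := P)).inter
        (convex_hyperplane ⟨(lmap w).map_add, (lmap w).map_smul⟩ 1)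
  · intro f hf hf1
    obtain ⟨xa, hxa, hma⟩ := Finset.exists_max_image A f hAne
    obtain ⟨xb, hxb, hmb⟩ := Finset.exists_max_image B f hBne
    have h1 := inv_card_sum_le hAne hma
    have h2 := inv_card_sum_le hBne hmb
    have hch : f xa + f xb ≤ 1 := cp_pair hr hf (by rw [hrA xa hxa, hrB xb hxb]; exact hab)
    have hrest : 0 ≤ ∑ x ∈ Finset.univ \ (A ∪ B ∪ {z}), f x :=
      Finset.sum_nonneg fun x _ => hf.1 x
    rw [key] at hf1
    have hR : ∑ x ∈ Finset.univ \ (A ∪ B ∪ {z}), f x = 0 := by linarith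
    have hSA : (A.card:ℝ)⁻¹ * ∑ x ∈ A, f x = f xa := by linarith
    have hSB : (B.card:ℝ)⁻¹ * ∑ x ∈ B, f x = f xb := by linarith
    have hsum1 : f xa + f xb = 1 := by linarith
    have hcA := const_on_of_eq hAne hma hSA
    have hcB := const_on_of_eq hBne hmb hSB
    have hzero : ∀ x ∈ Finset.univ \ (A ∪ B ∪ {z}), f x = 0 :=
      fun x hx => (Finset.sum_eq_zero_iff_of_nonneg (fun y _ => hf.1 y)).1 hR x hx
    have htz : f z ≤ f xb := by
      have := cp_pair hr hf (x := xa) (y := z) (by rw [hrA xa hxa, hz]; exact hab)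
      linarith
    refine mem_hull3 (p := f) (α := f xa) (β := f xb - f z) (γ := f z)
      (hf.1 xa) (by linarith) (hf.1 z) (by linarith [hsum1]) ?_
    funext x
    by_cases hxA : x ∈ A
    · have hxB : x ∉ B := Finset.disjoint_left.1 hdAB hxA
      have hxz : x ≠ z := fun h => hzA (h ▸ hxA)
      simp [rho, hxA, hxB, hxz, hcA x hxA]
    · by_cases hxB : x ∈ B
      · have hxz : x ≠ z := fun h => hzB (h ▸ hxB)
        simp [rho, hxA, hxB, hxz, hcB x hxB]
      · by_cases hxz : x = z
        · subst hxz
          simp [rho, hxA, hxB]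
        · have := hzero x (by simp [hxA, hxB, hxz])
          simp [rho, hxA, hxB, hxz, this]

lemma mem_maxSet_iff {W : Finset P} {x : P} :
    x ∈ maxSet P W ↔ x ∈ W ∧ ∀ y ∈ W, ¬ x < y := by simp [maxSet]

lemma mem_genIdeal_iff {A : Finset P} {x : P} :
    x ∈ genIdeal P A ↔ ∃ a ∈ A, x ≤ a := by simp [genIdeal]

lemma genIdeal_isIdeal (A : Finset P) : IsIdealF P (genIdeal P A) := by
  intro x y hx hyx
  obtain ⟨a, ha, hxa⟩ := mem_genIdeal_iff.1 hx
  exact mem_genIdeal_iff.2 ⟨a, ha, hyx.trans hxa⟩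

section Struct

variable {r : P → ℕ} {n : ℕ} (hr : IsMaxRanked P r n)
include hr

lemma exists_le_maxSet {W : Finset P} {x : P} (hx : x ∈ W) :
    ∃ a ∈ maxSet P W, x ≤ a := by
  obtain ⟨a, ha, hmax⟩ := Finset.exists_max_image (W.filter (x ≤ ·)) r ⟨x, by simp [hx]⟩
  simp only [Finset.mem_filter] at ha
  refine ⟨a, mem_maxSet_iff.2 ⟨ha.1, fun y hy hlt => ?_⟩, ha.2⟩
  have hxy : x ≤ y := ha.2.trans hlt.le
  have h1 := hmax y (Finset.mem_filter.2 ⟨hy, hxy⟩)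
  have h2 := (hr.2.2 a y).1 hlt
  omega

lemma genIdeal_maxSet {J : Finset P} (hJ : IsIdealF P J) :
    genIdeal P (maxSet P J) = J := by
  ext x
  rw [mem_genIdeal_iff]
  constructor
  · rintro ⟨a, ha, hxa⟩
    exact hJ (mem_maxSet_iff.1 ha).1 hxa
  · intro hx
    exact exists_le_maxSet hr hx

lemma maxSet_nonempty {W : Finset P} (hW : W.Nonempty) : (maxSet P W).Nonempty := by
  obtain ⟨x, hx⟩ := hW
  obtain ⟨a, ha, _⟩ := exists_le_maxSet hr hx
  exact ⟨a, ha⟩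

lemma rank_le_of_mem_ideal {J : Finset P} {j : ℕ} (hj : maxSet P J ⊆ level P r j)
    {x : P} (hx : x ∈ J) : r x ≤ j := by
  obtain ⟨a, ha, hxa⟩ := exists_le_maxSet hr hx
  have := (mem_level_iff hr).1 (hj ha)
  have := rank_le_of_le hr hxa
  omega

lemma mem_ideal_of_rank_lt {J : Finset P} (hJ : IsIdealF P J) {j : ℕ}
    (hj : maxSet P J ⊆ level P r j) (hJm : (maxSet P J).Nonempty)
    {x : P} (hx : r x < j) : x ∈ J := by
  obtain ⟨a, ha⟩ := hJm
  have hra : r a = j := (mem_level_iff hr).1 (hj ha)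
  have hlt : x < a := (hr.2.2 x a).2 (by omega)
  exact hJ (mem_maxSet_iff.1 ha).1 hlt.le

lemma mem_maxSet_of_rank_eq {J : Finset P} {j : ℕ} (hj : maxSet P J ⊆ level P r j)
    {x : P} (hx : x ∈ J) (hxr : r x = j) : x ∈ maxSet P J := by
  refine mem_maxSet_iff.2 ⟨hx, fun y hy hlt => ?_⟩
  have h1 := (hr.2.2 x y).1 hlt
  have h2 := rank_le_of_mem_ideal hr hj hy
  omega

lemma eq_of_conn_level {W : Finset P} {i : ℕ} (hW : ∀ x ∈ W, r x = i)
    (hc : ConnIn P (↑W : Set P)) : ∀ x ∈ W, ∀ y ∈ W, x = y := by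
  intro x hx y hy
  have hnoadj : ∀ u v : (↑W : Set P),
      ¬ (SimpleGraph.induce (↑W : Set P) (compGraph P)).Adj u v := by
    rintro ⟨u, hu⟩ ⟨v, hv⟩ hadj
    have hadj' : (compGraph P).Adj u v := hadj
    obtain ⟨hne, hcomp⟩ := hadj'
    have hru : r u = i := hW u hu
    have hrv : r v = i := hW v hv
    rcases hcomp with h | h
    · exact hne (eq_of_le_rank_eq hr h (hru.trans hrv.symm))
    · exact hne (eq_of_le_rank_eq hr h (hrv.trans hru.symm)).symm
  obtain ⟨p⟩ := hc.preconnected ⟨x, hx⟩ ⟨y, hy⟩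
  cases p with
  | nil => rfl
  | cons h _ => exact absurd h (hnoadj _ _)

end Struct

end Aux

/-- Case 1 of Lemma 3.4: if `J ⊆ K` are nonempty distinct connected
poset ideals with `K \ J` connected, `|max J| ≥ 2`, `max J ⊆ P_j`, `max K ⊆ P_k`,
`j ≤ k ≤ n`, then `j ≥ 1`, the sets `P_{j-1}`, `max J`, `max K` are pairwise distinct
antichains, and `{P_{j-1}, max J, max K} ∈ Δ*_C(P)`. -/
theorem case1_mem_DeltaStarC
    (r : P → ℕ) (n : ℕ) (hr : IsMaxRanked P r n)
    (J K : Finset P) (hJ : IsIdealF P J) (hK : IsIdealF P K)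
    (hJne : J.Nonempty) (hKne : K.Nonempty) (hne : J ≠ K) (hJK : J ⊆ K)
    (hcJ : ConnIn P (↑J)) (hcK : ConnIn P (↑K)) (hcKJ : ConnIn P (↑(K \ J)))
    (hmaxJ : 2 ≤ (maxSet P J).card)
    (j k : ℕ) (hjk : j ≤ k) (hkn : k ≤ n)
    (hj : maxSet P J ⊆ level P r j) (hk : maxSet P K ⊆ level P r k) :
    1 ≤ j ∧
    IsAntichainF P (level P r (j - 1)) ∧ IsAntichainF P (maxSet P J) ∧
      IsAntichainF P (maxSet P K) ∧
    level P r (j - 1) ≠ maxSet P J ∧ level P r (j - 1) ≠ maxSet P K ∧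
      maxSet P J ≠ maxSet P K ∧
    ({level P r (j - 1), maxSet P J, maxSet P K} : Finset (Finset P)) ∈ DeltaStarC P := by
  classical
  set A := level P r (j - 1) with hAdef
  set B := maxSet P J with hBdef
  set C := maxSet P K with hCdef
  have hBne : B.Nonempty := Finset.card_pos.1 (by omega)
  have hCne : C.Nonempty := maxSet_nonempty hr hKne
  obtain ⟨b1, hb1, b2, hb2, hb12⟩ := Finset.one_lt_card.1 (by omega : 1 < B.card)
  have hb1J : b1 ∈ J := (mem_maxSet_iff.1 hb1).1
  have hb2J : b2 ∈ J := (mem_maxSet_iff.1 hb2).1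
  have hrb1 : r b1 = j := (mem_level_iff hr).1 (hj hb1)
  have hrb2 : r b2 = j := (mem_level_iff hr).1 (hj hb2)
  -- j ≥ 1
  have hj1 : 1 ≤ j := by
    by_contra h
    have hj0 : j = 0 := by omega
    have hJlev : ∀ x ∈ J, r x = 0 := fun x hx => by
      have := rank_le_of_mem_ideal hr hj hx; omega
    exact hb12 (eq_of_conn_level hr hJlev hcJ b1 hb1J b2 hb2J)
  have hAne : A.Nonempty := level_nonempty hr (by omega : j - 1 ≤ n)
  -- antichains
  have haA : IsAntichainF P A := antichain_of_subset_level hr (Finset.Subset.refl A)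
  have haB : IsAntichainF P B := antichain_of_subset_level hr hj
  have haC : IsAntichainF P C := antichain_of_subset_level hr hk
  -- distinctness
  have hAB : A ≠ B := by
    intro h
    have : b1 ∈ A := h ▸ hb1
    have := (mem_level_iff hr).1 this
    omega
  have hAC : A ≠ C := by
    obtain ⟨c1, hc1⟩ := hCne
    intro h
    have : c1 ∈ A := h ▸ hc1
    have h1 := (mem_level_iff hr).1 this
    have h2 := (mem_level_iff hr).1 (hk hc1)
    omega
  have hBC : B ≠ C := fun h =>
    hne (by rw [← genIdeal_maxSet hr hJ, ← genIdeal_maxSet hr hK, ← hBdef, ← hCdef, h])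
  have hrAB : rho P A ≠ rho P B := fun h => hAB (rho_inj h)
  have hrAC : rho P A ≠ rho P C := fun h => hAC (rho_inj h)
  have hrBC : rho P B ≠ rho P C := fun h => hBC (rho_inj h)
  -- the chain-polytope edge {A, B}
  have hedgeC : IsEdgeOf P (chainPolytope P) (rho P A) (rho P B) :=
    ⟨hrAB, face2 hr (Finset.Subset.refl A) hj hAne hBne (by omega : j - 1 ≠ j)⟩
  -- genIdeal A
  set L := genIdeal P A with hLdef
  have hLmem : ∀ x, x ∈ L ↔ r x ≤ j - 1 := by
    intro x
    rw [hLdef, mem_genIdeal_iff]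
    constructor
    · rintro ⟨a, ha, hxa⟩
      have h1 := (mem_level_iff hr).1 ha
      have h2 := rank_le_of_le hr hxa
      omega
    · intro hx
      rcases eq_or_lt_of_le hx with h | h
      · exact ⟨x, (mem_level_iff hr).2 h, le_rfl⟩
      · obtain ⟨a, ha⟩ := hAne
        have hra := (mem_level_iff hr).1 ha
        exact ⟨a, ha, ((hr.2.2 x a).2 (by omega)).le⟩
  have hgenB : genIdeal P B = J := genIdeal_maxSet hr hJ
  have hLJ : L ⊆ J := fun x hx =>
    mem_ideal_of_rank_lt hr hJ hj hBne (by have := (hLmem x).1 hx; omega)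
  have hb1L : b1 ∉ L := fun h => by have := (hLmem b1).1 h; omega
  have hb2L : b2 ∉ L := fun h => by have := (hLmem b2).1 h; omega
  -- the two auxiliary ideals
  have hyI : IsIdealF P (L ∪ {b1}) := by
    intro x y hx hyx
    rcases Finset.mem_union.1 hx with hx | hx
    · exact Finset.mem_union_left _ (genIdeal_isIdeal A hx hyx)
    · have hx1 : x = b1 := Finset.mem_singleton.1 hx
      subst hx1
      rcases eq_or_lt_of_le hyx with h | h
      · exact Finset.mem_union_right _ (Finset.mem_singleton.2 h)
      · have := (hr.2.2 y x).1 h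
        exact Finset.mem_union_left _ ((hLmem y).2 (by omega))
  have hzI : IsIdealF P (J \ {b1}) := by
    intro x y hx hyx
    rw [Finset.mem_sdiff, Finset.mem_singleton] at hx ⊢
    refine ⟨hJ hx.1 hyx, fun h => ?_⟩
    subst h
    rcases eq_or_lt_of_le hyx with h | h
    · exact hx.2 h.symm
    · exact (mem_maxSet_iff.1 hb1).2 x hx.1 h
  have hmid : (1/2 : ℝ) • rho P (L ∪ {b1}) + (1/2 : ℝ) • rho P (J \ {b1})
      = (1/2 : ℝ) • rho P L + (1/2 : ℝ) • rho P J := by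
    funext x
    simp only [Pi.add_apply, Pi.smul_apply, smul_eq_mul, rho, Finset.mem_union,
      Finset.mem_sdiff, Finset.mem_singleton]
    by_cases hxL : x ∈ L
    · have hxJ : x ∈ J := hLJ hxL
      have hx1 : x ≠ b1 := fun h => hb1L (h ▸ hxL)
      simp [hxL, hxJ, hx1]
    · by_cases hx1 : x = b1
      · subst hx1
        simp [hxL, hb1J]
      · by_cases hxJ : x ∈ J
        · simp [hxL, hx1, hxJ]
        · simp [hxL, hx1, hxJ]
  have hynot : rho P (L ∪ {b1}) ∉ convexHull ℝ ({rho P L, rho P J} : Set (P → ℝ)) := by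
    rw [convexHull_pair]
    rintro ⟨s, t, hs, ht, hst, heq⟩
    have h1 := congrFun heq b1
    have h2 := congrFun heq b2
    have v1 : (s • rho P L + t • rho P J) b1 = t := by simp [rho, hb1L, hb1J]
    have v1' : rho P (L ∪ {b1}) b1 = 1 := by simp [rho]
    have v2 : (s • rho P L + t • rho P J) b2 = t := by simp [rho, hb2L, hb2J]
    have v2' : rho P (L ∪ {b1}) b2 = 0 := by simp [rho, hb2L, hb12.symm]
    have ht1 : t = 1 := by rw [← v1, h1, v1']
    have ht0 : t = 0 := by rw [← v2, h2, v2']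
    linarith
  have hnotedge : ¬ IsEdgeOf P (orderPolytope P) (rho P L) (rho P J) :=
    not_edge_of_mid (rho_ideal_mem_op hyI) (rho_ideal_mem_op hzI) hmid hynot
  have hestar : EstarC P A B :=
    ⟨haA, haB, hAB, hedgeC, by rw [hgenB]; exact hnotedge⟩
  -- the triangular face
  have hface : IsExposed ℝ (chainPolytope P)
      (convexHull ℝ {rho P A, rho P B, rho P C}) := by
    rcases lt_or_eq_of_le hjk with hlt | heq
    · exact face3 hr (Finset.Subset.refl A) hj hk hAne hBne hCne
        (by omega) (by omega) (by omega)
    · subst heq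
      -- K \ J is a singleton {z} of rank j
      have hKJlev : ∀ x ∈ K \ J, r x = j := by
        intro x hx
        rw [Finset.mem_sdiff] at hx
        have h1 : r x ≤ j := rank_le_of_mem_ideal hr hk hx.1
        have h2 : ¬ r x < j := fun h => hx.2 (mem_ideal_of_rank_lt hr hJ hj hBne h)
        omega
      obtain ⟨⟨z0, hz0⟩⟩ := hcKJ.nonempty
      have hz0' : z0 ∈ K \ J := by exact_mod_cast hz0
      have hKJz : K \ J = {z0} := by
        ext x
        rw [Finset.mem_singleton]
        constructor
        · intro hx
          exact eq_of_conn_level hr hKJlev hcKJ x hx z0 hz0'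
        · rintro rfl; exact hz0'
      have hrz0 : r z0 = j := hKJlev z0 hz0'
      have hz0K : z0 ∈ K := (Finset.mem_sdiff.1 hz0').1
      have hz0J : z0 ∉ J := (Finset.mem_sdiff.1 hz0').2
      have hz0B : z0 ∉ B := fun h => hz0J (mem_maxSet_iff.1 h).1
      have hCeq : C = insert z0 B := by
        ext x
        rw [Finset.mem_insert]
        constructor
        · intro hx
          have hxK : x ∈ K := (mem_maxSet_iff.1 hx).1
          have hxr : r x = j := (mem_level_iff hr).1 (hk hx)
          by_cases hxJ : x ∈ J
          · exact Or.inr (mem_maxSet_of_rank_eq hr hj hxJ hxr)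
          · have : x ∈ K \ J := Finset.mem_sdiff.2 ⟨hxK, hxJ⟩
            exact Or.inl (Finset.mem_singleton.1 (hKJz ▸ this))
        · rintro (rfl | hx)
          · exact mem_maxSet_of_rank_eq hr hk hz0K hrz0
          · exact mem_maxSet_of_rank_eq hr hk (hJK (mem_maxSet_iff.1 hx).1)
              ((mem_level_iff hr).1 (hj hx))
      rw [hCeq]
      exact face3z hr (Finset.Subset.refl A) hj hrz0 hz0B hAne hBne (by omega)
  have htri : IsTriFaceOf P (chainPolytope P) (rho P A) (rho P B) (rho P C) :=
    ⟨hrAB, hrAC, hrBC, hface⟩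
  refine ⟨hj1, haA, haB, haC, hAB, hAC, hBC, ?_⟩
  exact ⟨⟨A, B, C, rfl, hAB, hAC, hBC, haA, haB, haC, htri⟩,
    A, by simp, B, by simp, hAB, hestar⟩
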